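/- The subgroup of the group of invertible 2×2 matrices over E generated by g₁ and g₂ is isomorphic as a group to SL₂(𝔽₃) (the special linear group of 2×2 matrices of determinant 1 over the field with 3 elements); in particular it has order 24. -/

import Mathlib

/-!
Conjugating by `diag(1, ω - 1)` turns `g₁, g₂` into matrices over `ℤ[ω]`, and these generate an
explicit group of 24 matrices over `ℤ[ω]` that reduction modulo the prime `ω - 1` (with residue
field `𝔽₃`) maps bijectively onto `SL(2, 𝔽₃)`. Inverting this reduction gives an injective
homomorphism `SL(2, 𝔽₃) → GL(2, E)` sending the transvections `[[1,2],[0,1]]` and `[[1,0],[2,1]]`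
to `g₁, g₂`; multiplicativity need only be checked against these two transvections, because they
generate `SL(2, 𝔽₃)`. The closure of `{g₁, g₂}` is then the image of this homomorphism.
-/

open Matrix MatrixGroups

namespace Matrix.SpecialLinearGroup

lemma transvection_pow {ι F : Type*} [DecidableEq ι] [Fintype ι] [CommRing F] {i j : ι}
    (hij : i ≠ j) (b : F) (n : ℕ) : transvection hij b ^ n = transvection hij (n • b) := by
  induction n with
  | zero => rw [pow_zero, zero_nsmul, transvection_coeff_zero]
  | succ n ih => rw [pow_succ, ih, succ_nsmul, transvection_add]

lemma transvection_mem_zpowers {ι : Type*} [DecidableEq ι] [Fintype ι] {p : ℕ} [Fact p.Prime]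
    {i j : ι} (hij : i ≠ j) {a : ZMod p} (ha : a ≠ 0) (c : ZMod p) :
    transvection hij c ∈ Subgroup.zpowers (transvection hij a) := by
  have hc : c = (a⁻¹ * c).val • a := by
    rw [nsmul_eq_mul, ZMod.natCast_zmod_val, mul_comm, ← mul_assoc, mul_inv_cancel₀ ha, one_mul]
  rw [hc, ← transvection_pow]
  exact Subgroup.npow_mem_zpowers _ _

theorem SL2_closure_transvection_eq_top {p : ℕ} [Fact p.Prime] {a b : ZMod p}
    (ha : a ≠ 0) (hb : b ≠ 0) :
    Subgroup.closure ({transvection zero_ne_one a, transvection one_ne_zero b} : Set SL(2, ZMod p))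
      = ⊤ := by
  set S : Set SL(2, ZMod p) := {transvection zero_ne_one a, transvection one_ne_zero b}
  have zpowers_le {t : SL(2, ZMod p)} (ht : t ∈ S) : Subgroup.zpowers t ≤ Subgroup.closure S :=
    Subgroup.zpowers_le.2 (Subgroup.subset_closure ht)
  refine eq_top_iff.2 fun x _ => SL2.transvection_induction _ (fun i j hij c => ?_)
    (fun _ _ => Subgroup.mul_mem _) x
  fin_cases i <;> fin_cases j
  · exact absurd rfl hij
  · exact zpowers_le (Set.mem_insert _ _) (transvection_mem_zpowers hij ha c)
  · exact zpowers_le (Set.mem_insert_of_mem _ rfl) (transvection_mem_zpowers hij hb c)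
  · exact absurd rfl hij

end Matrix.SpecialLinearGroup

/-- `⟨a, b⟩` stands for `a + b ω`, where `ω ^ 2 + ω + 1 = 0`. -/
@[ext]
structure EisensteinInt where
  a : ℤ
  b : ℤ
deriving DecidableEq

namespace EisensteinInt

instance : Zero EisensteinInt := ⟨⟨0, 0⟩⟩
instance : One EisensteinInt := ⟨⟨1, 0⟩⟩
instance : Add EisensteinInt := ⟨fun x y => ⟨x.a + y.a, x.b + y.b⟩⟩
instance : Neg EisensteinInt := ⟨fun x => ⟨-x.a, -x.b⟩⟩
instance : Mul EisensteinInt :=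
  ⟨fun x y => ⟨x.a * y.a - x.b * y.b, x.a * y.b + x.b * y.a - x.b * y.b⟩⟩

lemma zero_def : (0 : EisensteinInt) = ⟨0, 0⟩ := rfl
lemma one_def : (1 : EisensteinInt) = ⟨1, 0⟩ := rfl
lemma add_def (x y : EisensteinInt) : x + y = ⟨x.a + y.a, x.b + y.b⟩ := rfl
lemma neg_def (x : EisensteinInt) : -x = ⟨-x.a, -x.b⟩ := rfl
lemma mul_def (x y : EisensteinInt) :
    x * y = ⟨x.a * y.a - x.b * y.b, x.a * y.b + x.b * y.a - x.b * y.b⟩ := rfl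

instance : CommRing EisensteinInt where
  add_assoc _ _ _ := by ext <;> simp only [add_def] <;> ring
  zero_add _ := by ext <;> simp only [add_def, zero_def] <;> ring
  add_zero _ := by ext <;> simp only [add_def, zero_def] <;> ring
  add_comm _ _ := by ext <;> simp only [add_def] <;> ring
  left_distrib _ _ _ := by ext <;> simp only [add_def, mul_def] <;> ring
  right_distrib _ _ _ := by ext <;> simp only [add_def, mul_def] <;> ring
  zero_mul _ := by ext <;> simp only [mul_def, zero_def] <;> ring
  mul_zero _ := by ext <;> simp only [mul_def, zero_def] <;> ring
  mul_assoc _ _ _ := by ext <;> simp only [mul_def] <;> ring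
  one_mul _ := by ext <;> simp only [mul_def, one_def] <;> ring
  mul_one _ := by ext <;> simp only [mul_def, one_def] <;> ring
  neg_add_cancel _ := by ext <;> simp only [neg_def, add_def, zero_def] <;> ring
  mul_comm _ _ := by ext <;> simp only [mul_def] <;> ring
  nsmul := nsmulRec
  zsmul := zsmulRec

def ω : EisensteinInt := ⟨0, 1⟩

section toRing

variable {R : Type*} [CommRing R] (ζ : R) (hζ : ζ ^ 2 + ζ + 1 = 0)

def toRing : EisensteinInt →+* R where
  toFun x := x.a + x.b * ζ
  map_one' := by simp [one_def]
  map_zero' := by simp [zero_def]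
  map_add' x y := by simp only [add_def]; push_cast; ring
  map_mul' x y := by
    simp only [mul_def]
    push_cast
    linear_combination (-(x.b : R) * y.b) * hζ

lemma toRing_apply (x : EisensteinInt) : toRing ζ hζ x = x.a + x.b * ζ := rfl

lemma toRing_ω : toRing ζ hζ ω = ζ := by simp [toRing_apply, ω]

lemma toRing_injective [CharZero R] : Function.Injective (toRing ζ hζ) := by
  refine (injective_iff_map_eq_zero _).2 fun x hx => ?_
  rw [toRing_apply] at hx
  have hnorm : x.a ^ 2 - x.a * x.b + x.b ^ 2 = 0 := by
    have : ((x.a ^ 2 - x.a * x.b + x.b ^ 2 : ℤ) : R) = 0 := by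
      push_cast
      linear_combination ((x.a : R) - x.b - x.b * ζ) * hx + (x.b : R) ^ 2 * hζ
    exact_mod_cast this
  have hb : x.b = 0 := by nlinarith [sq_nonneg (2 * x.a - x.b), sq_nonneg x.b]
  have ha : x.a = 0 := by simpa [hb] using hnorm
  ext <;> simp [ha, hb, zero_def]

end toRing

def reduce : EisensteinInt →+* ZMod 3 := toRing 1 (by decide)

/-- The binary tetrahedral group: the group generated by `D g₁ D⁻¹` and `D g₂ D⁻¹`, where
`D = diag(1, ω - 1)`. `reduce` maps it bijectively onto `SL(2, 𝔽₃)`. -/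
def binaryTetrahedral : List (Matrix (Fin 2) (Fin 2) EisensteinInt) :=
  [!![0, ω; -ω^2, 0], !![0, ω; -ω, ω], !![0, ω; -1, -ω^2],
   !![0, -ω; ω^2, 0], !![0, -ω; 1, ω^2], !![0, -ω; ω, -ω],
   !![1, 0; 0, 1], !![1, 0; 1, ω^2], !![1, 0; -ω, ω],
   !![ω, 1; 0, 1], !![ω, 1; ω, -ω], !![ω, 1; -ω^2, 0],
   !![ω^2, -ω^2; 0, 1], !![ω^2, -ω^2; ω^2, 0], !![ω^2, -ω^2; -1, -ω^2],
   !![-1, 0; 0, -1], !![-1, 0; ω, -ω], !![-1, 0; -1, -ω^2],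
   !![-ω^2, ω^2; 0, -1], !![-ω^2, ω^2; 1, ω^2], !![-ω^2, ω^2; -ω^2, 0],
   !![-ω, -1; 0, -1], !![-ω, -1; ω^2, 0], !![-ω, -1; -ω, ω]]

def liftSL2 (x : SL(2, ZMod 3)) : Matrix (Fin 2) (Fin 2) EisensteinInt :=
  (binaryTetrahedral.find? fun M => M.map reduce = (x : Matrix (Fin 2) (Fin 2) (ZMod 3))).getD 1

open Matrix.SpecialLinearGroup

lemma map_reduce_liftSL2 (x : SL(2, ZMod 3)) : (liftSL2 x).map reduce = x := by
  revert x; decide +kernel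

lemma liftSL2_injective : Function.Injective liftSL2 := fun x y h =>
  Subtype.ext (by rw [← map_reduce_liftSL2 x, ← map_reduce_liftSL2 y, h])

lemma liftSL2_transvection₀₁ : liftSL2 (transvection zero_ne_one 2) = !![ω^2, -ω^2; 0, 1] := by
  decide +kernel

lemma liftSL2_transvection₁₀ : liftSL2 (transvection one_ne_zero 2) = !![1, 0; -ω, ω] := by
  decide +kernel

lemma closure_transvection_two_eq_top :
    Subgroup.closure ({transvection zero_ne_one 2, transvection one_ne_zero 2} :
      Set SL(2, ZMod 3)) = ⊤ :=
  SL2_closure_transvection_eq_top (by decide) (by decide)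

lemma liftSL2_mul_of_mem (x : SL(2, ZMod 3)) :
    ∀ y ∈ ({transvection zero_ne_one 2, transvection one_ne_zero 2} : Set SL(2, ZMod 3)),
      liftSL2 (x * y) = liftSL2 x * liftSL2 y := by
  rintro y (rfl | rfl) <;> revert x <;> decide +kernel

def liftSL2Hom : SL(2, ZMod 3) →* Matrix (Fin 2) (Fin 2) EisensteinInt :=
  MonoidHom.ofClosureMEqTopRight liftSL2
    (by rw [← Subgroup.closure_toSubmonoid_of_finite, closure_transvection_two_eq_top]; rfl)
    (by decide +kernel) liftSL2_mul_of_mem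

lemma liftSL2Hom_apply (x : SL(2, ZMod 3)) : liftSL2Hom x = liftSL2 x := rfl

end EisensteinInt

open EisensteinInt Matrix.SpecialLinearGroup

lemma sub_one_ne_zero_of_sq_add_self_add_one_eq_zero {R : Type*} [Ring R] [CharZero R] {ζ : R}
    (hζ : ζ ^ 2 + ζ + 1 = 0) : ζ - 1 ≠ 0 := by
  intro h
  rw [sub_eq_zero.1 h] at hζ
  norm_num at hζ

section Representation

variable {K : Type*} [Field K] [CharZero K] (ζ : K) (hζ : ζ ^ 2 + ζ + 1 = 0)

def diagSubOne : GL (Fin 2) K :=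
  GeneralLinearGroup.mkOfDetNeZero !![1, 0; 0, ζ - 1] (by
    simpa [det_fin_two_of] using sub_one_ne_zero_of_sq_add_self_add_one_eq_zero hζ)

lemma coe_diagSubOne : (diagSubOne ζ hζ : Matrix (Fin 2) (Fin 2) K) = !![1, 0; 0, ζ - 1] := rfl

def binaryTetrahedralRep : SL(2, ZMod 3) →* GL (Fin 2) K :=
  (MulAut.conj (diagSubOne ζ hζ)⁻¹).toMonoidHom.comp
    ((toRing ζ hζ).mapMatrix.toMonoidHom.comp liftSL2Hom).toHomUnits

lemma binaryTetrahedralRep_injective : Function.Injective (binaryTetrahedralRep ζ hζ) := by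
  refine (MulAut.conj _).injective.comp fun x y h => liftSL2_injective ?_
  exact Matrix.map_injective (toRing_injective ζ hζ) (congrArg Units.val h)

lemma coe_binaryTetrahedralRep_eq {x : SL(2, ZMod 3)} {M : Matrix (Fin 2) (Fin 2) K}
    (h : (liftSL2 x).map (toRing ζ hζ) * diagSubOne ζ hζ = diagSubOne ζ hζ * M) :
    (binaryTetrahedralRep ζ hζ x : Matrix (Fin 2) (Fin 2) K) = M := by
  refine (diagSubOne ζ hζ).isUnit.mul_left_cancel ?_
  rw [← h, ← Units.val_mul]
  simp [binaryTetrahedralRep, liftSL2Hom_apply, mul_assoc]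

lemma coe_binaryTetrahedralRep_transvection₀₁ :
    (binaryTetrahedralRep ζ hζ (transvection zero_ne_one 2) : Matrix (Fin 2) (Fin 2) K) =
      !![ζ ^ 2, ζ ^ 2 - 1; 0, 1] := by
  refine coe_binaryTetrahedralRep_eq ζ hζ ?_
  rw [liftSL2_transvection₀₁, coe_diagSubOne]
  ext i j
  fin_cases i <;> fin_cases j <;> simp [Matrix.mul_apply, Fin.sum_univ_two, toRing_ω]
  linear_combination (1 - ζ) * hζ

lemma coe_binaryTetrahedralRep_transvection₁₀ :
    (binaryTetrahedralRep ζ hζ (transvection one_ne_zero 2) : Matrix (Fin 2) (Fin 2) K) =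
      !![1, 0; (ζ - 1) / 3, ζ] := by
  refine coe_binaryTetrahedralRep_eq ζ hζ ?_
  rw [liftSL2_transvection₁₀, coe_diagSubOne]
  ext i j
  fin_cases i <;> fin_cases j <;> simp [Matrix.mul_apply, Fin.sum_univ_two, toRing_ω]
  · field_simp
    linear_combination (-1 : K) * hζ
  · ring

end Representation

theorem card_SL2_ZMod3 : Nat.card SL(2, ZMod 3) = 24 := by
  rw [Nat.card_eq_fintype_card]; decide +kernel

/-- Let `E = ℚ(ω)` be the cyclotomic field generated by a primitive third root of
unity `ω`, with `ω̄ = ω²`.  The subgroup of `GL₂(E)` generated by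
`g₁ = [[ω̄, ω̄−1],[0,1]]` and `g₂ = [[1,0],[(ω−1)/3, ω]]` is isomorphic to `SL₂(𝔽₃)`;
in particular it has order 24. -/
theorem stmt_0 (ω : CyclotomicField 3 ℚ) (hω : IsPrimitiveRoot ω 3)
    (g₁ g₂ : GL (Fin 2) (CyclotomicField 3 ℚ))
    (hg₁ : (g₁ : Matrix (Fin 2) (Fin 2) (CyclotomicField 3 ℚ)) = !![ω ^ 2, ω ^ 2 - 1; 0, 1])
    (hg₂ : (g₂ : Matrix (Fin 2) (Fin 2) (CyclotomicField 3 ℚ)) = !![1, 0; (ω - 1) / 3, ω]) :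
    Nonempty ((Subgroup.closure {g₁, g₂}) ≃*
      Matrix.SpecialLinearGroup (Fin 2) (ZMod 3)) ∧
    Nat.card (Subgroup.closure {g₁, g₂} : Subgroup (GL (Fin 2) (CyclotomicField 3 ℚ))) = 24 := by
  have hrel : ω ^ 2 + ω + 1 = 0 := by
    have h := hω.geom_sum_eq_zero (by norm_num)
    simp only [Finset.sum_range_succ, Finset.sum_range_zero] at h
    linear_combination h
  set ρ := binaryTetrahedralRep ω hrel
  have hρ₁ : ρ (transvection zero_ne_one 2) = g₁ :=
    Units.ext ((coe_binaryTetrahedralRep_transvection₀₁ ω hrel).trans hg₁.symm)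
  have hρ₂ : ρ (transvection one_ne_zero 2) = g₂ :=
    Units.ext ((coe_binaryTetrahedralRep_transvection₁₀ ω hrel).trans hg₂.symm)
  have hrange : Subgroup.closure {g₁, g₂} = ρ.range := by
    rw [MonoidHom.range_eq_map, ← closure_transvection_two_eq_top, MonoidHom.map_closure,
      Set.image_pair, hρ₁, hρ₂]
  let e : Subgroup.closure {g₁, g₂} ≃* SL(2, ZMod 3) :=
    (MulEquiv.subgroupCongr hrange).trans
      (MonoidHom.ofInjective (binaryTetrahedralRep_injective ω hrel)).symm
  exact ⟨⟨e⟩, by rw [Nat.card_congr e.toEquiv, card_SL2_ZMod3]⟩
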